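/- arXiv:1812.02641 — 3 statements merged into one kernel-verified Lean document; each statement's English description precedes it below -/
import Mathlib

section
/- Let G=(V,E) be a finite tree and {i,j}∈E with components G_{i∖j} and G_{j∖i} after removing {i,j}. For a Gibbs distribution with potentials {Φ_k} and {Ψ_{kl}}, the belief Z_i(x_i) = Φ_i(x_i) Σ_{x_{V∖i}} ∏_{{k,l}∈E} Ψ_{kl}(x_k,x_l) ∏_{k≠i} Φ_k(x_k) factors as Z_i(x_i) = Z_i^{i∖j}(x_i) · Σ_{x_j} Ψ_{ji}(x_j,x_i) Z_j^{j∖i}(x_j), where Z_i^{i∖j} and Z_j^{j∖i} are the beliefs at i and j computed with respect to the induced Gibbs distributions on G_{i∖j} and G_{j∖i}. -/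
open scoped Classical

/-- The product of edge potentials `Ψ k l (x k) (x l)` over the edges `{k,l}` of `G`
both of whose endpoints lie in the vertex set `C` (each unordered edge is represented
once, by the ordered pair with `k < l`). -/
noncomputable def edgeProd {V 𝒳 : Type} [Fintype V] [LinearOrder V]
    (G : SimpleGraph V) (C : Set V) (Ψ : V → V → 𝒳 → 𝒳 → ℝ) (x : V → 𝒳) : ℝ :=
  ∏ p ∈ Finset.univ.filter
      (fun p : V × V => G.Adj p.1 p.2 ∧ p.1 < p.2 ∧ p.1 ∈ C ∧ p.2 ∈ C),
    Ψ p.1 p.2 (x p.1) (x p.2)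

/-- The belief at node `i` with respect to the Gibbs distribution induced on the
subgraph of `G` spanned by the vertex set `C`:
`Z_i^C(x_i) = Φ_i(x_i) * Σ_{x_{C∖i}} ∏_{{k,l}∈E(C)} Ψ_{kl}(x_k,x_l) ∏_{k∈C,k≠i} Φ_k(x_k)`.
Configurations are represented as functions `x : V → 𝒳` frozen to a default value `x0`
outside of `C`, so that the sum ranges exactly over configurations on `C` with `x i = xi`. -/
noncomputable def belief {V 𝒳 : Type} [Fintype V] [LinearOrder V] [Fintype 𝒳]
    (G : SimpleGraph V) (C : Set V) (Φ : V → 𝒳 → ℝ) (Ψ : V → V → 𝒳 → 𝒳 → ℝ)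
    (x0 : 𝒳) (i : V) (xi : 𝒳) : ℝ :=
  Φ i xi *
    ∑ x ∈ Finset.univ.filter
        (fun x : V → 𝒳 => x i = xi ∧ ∀ v, v ∉ C → x v = x0),
      edgeProd G C Ψ x *
        ∏ v ∈ Finset.univ.filter (fun v => v ∈ C ∧ v ≠ i), Φ v (x v)

/-- The component `G_{a∖b}` of `G` with the edge `{a,b}` removed that contains `a`. -/
def compSet {V : Type} (G : SimpleGraph V) (a b : V) : Set V :=
  {w | (G.deleteEdges {s(a, b)}).Reachable a w}

/-- The Belief Propagation message from `j` to `i`: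
`m_{j→i}(x_i) = Σ_{x_j} Ψ_{ji}(x_j, x_i) Z_j^{j∖i}(x_j)`, where `Z_j^{j∖i}` is the belief
at `j` on the component of `G ∖ {i,j}` containing `j`. -/
noncomputable def msg {V 𝒳 : Type} [Fintype V] [LinearOrder V] [Fintype 𝒳]
    (G : SimpleGraph V) (Φ : V → 𝒳 → ℝ) (Ψ : V → V → 𝒳 → 𝒳 → ℝ)
    (x0 : 𝒳) (j i : V) (xi : 𝒳) : ℝ :=
  ∑ xj : 𝒳, Ψ j i xj xi * belief G (compSet G j i) Φ Ψ x0 j xj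

/-! Removing the edge `{i, j}` from a tree splits the vertices into the two complementary
components `compSet G i j ∋ i` and `compSet G j i ∋ j`, and every other edge lies inside one of
them. So the Gibbs weight of a configuration is (weight on the `i`-side) ·
`Ψ_{ji}(x_j, x_i) Φ_j(x_j)` · (weight on the `j`-side), and since a configuration is the same as
an independent pair of configurations on the two sides, the sum defining the belief factors. -/

lemma SimpleGraph.Reachable.mem_of_forall_adj {V : Type} {G : SimpleGraph V} {s : Set V}
    (hs : ∀ u v, G.Adj u v → u ∈ s → v ∈ s) {u v : V} (h : G.Reachable u v) (hu : u ∈ s) :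
    v ∈ s := by
  obtain ⟨p⟩ := h
  induction p with
  | nil => exact hu
  | cons hadj _ ih => exact ih (hs _ _ hadj hu)

section compSet

variable {V : Type} {G : SimpleGraph V} {a b : V}

lemma mem_compSet_self (G : SimpleGraph V) (a b : V) : a ∈ compSet G a b :=
  SimpleGraph.Reachable.refl a

lemma mem_compSet_iff_of_adj {k l : V} (hkl : G.Adj k l) (hne : s(k, l) ≠ s(a, b)) :
    k ∈ compSet G a b ↔ l ∈ compSet G a b := by
  have hadj : (G.deleteEdges {s(a, b)}).Adj k l := by simp [hkl, hne]
  exact ⟨fun hk => hk.trans hadj.reachable, fun hl => hl.trans hadj.symm.reachable⟩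

lemma compSet_union_compSet_swap (hconn : G.Connected) (a b : V) :
    compSet G a b ∪ compSet G b a = Set.univ := by
  refine Set.eq_univ_of_forall fun w =>
    (hconn a w).mem_of_forall_adj ?_ (.inl (mem_compSet_self G a b))
  intro u v huv hu
  by_cases he : s(u, v) = s(a, b)
  · rcases Sym2.eq_iff.1 he with ⟨-, rfl⟩ | ⟨-, rfl⟩
    · exact .inr (mem_compSet_self G v a)
    · exact .inl (mem_compSet_self G v b)
  · have he' : s(u, v) ≠ s(b, a) := by rwa [Sym2.eq_swap (a := b)]
    exact hu.imp (mem_compSet_iff_of_adj huv he).1 (mem_compSet_iff_of_adj huv he').1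

lemma disjoint_compSet_compSet_swap (hacyc : G.IsAcyclic) (hab : G.Adj a b) :
    Disjoint (compSet G a b) (compSet G b a) := by
  refine Set.disjoint_left.2 fun w haw hbw => ?_
  have hbw' : (G.deleteEdges {s(a, b)}).Reachable b w := by rwa [Sym2.eq_swap]
  exact SimpleGraph.isAcyclic_iff_forall_adj_isBridge.1 hacyc hab (haw.trans hbw'.symm)

lemma isCompl_compSet_compSet_swap (hconn : G.Connected) (hacyc : G.IsAcyclic)
    (hab : G.Adj a b) : IsCompl (compSet G a b) (compSet G b a) :=
  .of_eq (disjoint_compSet_compSet_swap hacyc hab).eq_bot (compSet_union_compSet_swap hconn a b)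

end compSet

lemma Finset.prod_eq_prod_filter_mul_prod_filter_mul_prod_filter {α M : Type} [CommMonoid M]
    (s : Finset α) (p q r : α → Prop) [DecidablePred p] [DecidablePred q] [DecidablePred r]
    (f : α → M)
    (h : ∀ a ∈ s, (p a ∧ ¬q a ∧ ¬r a) ∨ (¬p a ∧ q a ∧ ¬r a) ∨ (¬p a ∧ ¬q a ∧ r a)) :
    ∏ a ∈ s, f a = (∏ a ∈ s.filter p, f a) * (∏ a ∈ s.filter q, f a) * ∏ a ∈ s.filter r, f a := by
  simp only [Finset.prod_filter, ← Finset.prod_mul_distrib]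
  refine Finset.prod_congr rfl fun a ha => ?_
  rcases h a ha with ⟨hp, hq, hr⟩ | ⟨hp, hq, hr⟩ | ⟨hp, hq, hr⟩ <;> simp [hp, hq, hr]

lemma IsCompl.mem_iff_notMem {α : Type} {A B : Set α} (h : IsCompl A B) (a : α) :
    a ∈ B ↔ a ∉ A := by
  rw [← h.compl_eq, Set.mem_compl_iff]

section Configurations

variable {V 𝒳 : Type} [Fintype V] [DecidableEq V] [Fintype 𝒳]

lemma sum_filter_mul_eq_sum_mul_sum {A B : Set V} (hAB : IsCompl A B) (x0 : 𝒳)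
    (p : (V → 𝒳) → Prop) (F H : (V → 𝒳) → ℝ)
    (hp : ∀ x y, Set.EqOn x y A → (p x ↔ p y)) (hF : ∀ x y, Set.EqOn x y A → F x = F y)
    (hH : ∀ x y, Set.EqOn x y B → H x = H y) :
    ∑ x ∈ Finset.univ.filter p, F x * H x
      = (∑ y ∈ Finset.univ.filter (fun y => p y ∧ ∀ v, v ∉ A → y v = x0), F y)
        * ∑ z ∈ Finset.univ.filter (fun z : V → 𝒳 => ∀ v, v ∉ B → z v = x0), H z := by
  have hB := hAB.mem_iff_notMem
  rw [Finset.sum_mul_sum, ← Finset.sum_product']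
  refine Finset.sum_nbij' (fun x => (A.piecewise x fun _ => x0, B.piecewise x fun _ => x0))
    (fun yz => A.piecewise yz.1 yz.2) ?_ ?_ ?_ ?_ ?_
  · intro x hx
    simp only [Finset.mem_filter, Finset.mem_product, Finset.mem_univ, true_and] at hx ⊢
    refine ⟨⟨(hp _ _ (A.piecewise_eqOn _ _)).2 hx, fun v hv => A.piecewise_eq_of_notMem _ _ hv⟩,
      fun v hv => B.piecewise_eq_of_notMem _ _ hv⟩
  · rintro ⟨y, z⟩ hyz
    simp only [Finset.mem_filter, Finset.mem_product, Finset.mem_univ, true_and] at hyz ⊢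
    exact (hp _ _ (A.piecewise_eqOn y z)).2 hyz.1.1
  · intro x _
    ext v
    by_cases hv : v ∈ A <;> simp [Set.piecewise, hv, hB]
  · rintro ⟨y, z⟩ hyz
    simp only [Finset.mem_filter, Finset.mem_product, Finset.mem_univ, true_and] at hyz
    ext v
    · by_cases hv : v ∈ A <;> simp [Set.piecewise, hv, hyz.1.2 v]
    · by_cases hv : v ∈ B <;> simp [Set.piecewise, hv, (hB v).1, hyz.2 v]
  · intro x _
    rw [hF _ _ (A.piecewise_eqOn _ _).symm, hH _ _ (B.piecewise_eqOn _ _).symm]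

end Configurations

section Gibbs

variable {V 𝒳 : Type} [Fintype V] [LinearOrder V]

noncomputable def gibbsWeight (G : SimpleGraph V) (C : Set V) (Φ : V → 𝒳 → ℝ)
    (Ψ : V → V → 𝒳 → 𝒳 → ℝ) (i : V) (x : V → 𝒳) : ℝ :=
  edgeProd G C Ψ x * ∏ v ∈ Finset.univ.filter (fun v => v ∈ C ∧ v ≠ i), Φ v (x v)

lemma belief_eq_mul_sum_gibbsWeight [Fintype 𝒳] (G : SimpleGraph V) (C : Set V)
    (Φ : V → 𝒳 → ℝ) (Ψ : V → V → 𝒳 → 𝒳 → ℝ) (x0 : 𝒳) (i : V) (xi : 𝒳) :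
    belief G C Φ Ψ x0 i xi = Φ i xi *
      ∑ x ∈ Finset.univ.filter (fun x : V → 𝒳 => x i = xi ∧ ∀ v, v ∉ C → x v = x0),
        gibbsWeight G C Φ Ψ i x :=
  rfl

lemma gibbsWeight_congr (G : SimpleGraph V) (C : Set V) (Φ : V → 𝒳 → ℝ)
    (Ψ : V → V → 𝒳 → 𝒳 → ℝ) (i : V) {x y : V → 𝒳} (h : Set.EqOn x y C) :
    gibbsWeight G C Φ Ψ i x = gibbsWeight G C Φ Ψ i y := by
  unfold gibbsWeight edgeProd
  congr 1 <;> refine Finset.prod_congr rfl fun p hp => ?_ <;>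
    simp only [Finset.mem_filter, Finset.mem_univ, true_and] at hp
  · rw [h hp.2.2.1, h hp.2.2.2]
  · rw [h hp.1]

lemma sum_mul_belief_eq_sum [Fintype 𝒳] (G : SimpleGraph V) (C : Set V) (Φ : V → 𝒳 → ℝ)
    (Ψ : V → V → 𝒳 → 𝒳 → ℝ) (x0 : 𝒳) (j : V) (h : 𝒳 → ℝ) :
    ∑ a, h a * belief G C Φ Ψ x0 j a
      = ∑ z ∈ Finset.univ.filter (fun z : V → 𝒳 => ∀ v, v ∉ C → z v = x0),
          h (z j) * (Φ j (z j) * gibbsWeight G C Φ Ψ j z) := by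
  rw [← Finset.sum_fiberwise _ (fun z : V → 𝒳 => z j)]
  refine Finset.sum_congr rfl fun a _ => ?_
  rw [belief_eq_mul_sum_gibbsWeight, Finset.filter_filter, Finset.mul_sum, Finset.mul_sum]
  refine Finset.sum_congr (Finset.filter_congr fun z _ => and_comm) fun z hz => ?_
  rw [(Finset.mem_filter.1 hz).2.2]

variable {A B : Set V} {i j : V}

lemma prod_filter_lt_and_sym2_eq {M : Type} [CommMonoid M] (f : V → V → M)
    (hf : f j i = f i j) (hij : i ≠ j) :
    ∏ p ∈ Finset.univ.filter (fun p : V × V => p.1 < p.2 ∧ s(p.1, p.2) = s(i, j)), f p.1 p.2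
      = f i j := by
  wlog h : i < j generalizing i j
  · rw [Sym2.eq_swap (a := i), ← hf]
    exact this hf.symm hij.symm (hij.lt_or_gt.resolve_left h)
  rw [Finset.prod_eq_single_of_mem (i, j) (by simp [h])]
  rintro ⟨k, l⟩ hkl hne
  simp only [Finset.mem_filter, Finset.mem_univ, true_and, Sym2.eq_iff] at hkl
  grind

lemma edgeProd_univ_eq_mul (G : SimpleGraph V) (Ψ : V → V → 𝒳 → 𝒳 → ℝ)
    (hΨ : ∀ a b, Ψ j i b a = Ψ i j a b) (hij : G.Adj i j) (hAB : IsCompl A B) (hi : i ∈ A)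
    (hj : j ∈ B) (hcut : ∀ k l, G.Adj k l → s(k, l) ≠ s(i, j) → (k ∈ A ↔ l ∈ A))
    (x : V → 𝒳) :
    edgeProd G Set.univ Ψ x = edgeProd G A Ψ x * edgeProd G B Ψ x * Ψ i j (x i) (x j) := by
  have hB := hAB.mem_iff_notMem
  have hcross : ∏ p ∈ (Finset.univ.filter fun p : V × V => G.Adj p.1 p.2 ∧ p.1 < p.2).filter
      (fun p => s(p.1, p.2) = s(i, j)), Ψ p.1 p.2 (x p.1) (x p.2) = Ψ i j (x i) (x j) := by
    rw [Finset.filter_filter, ← prod_filter_lt_and_sym2_eq (fun k l => Ψ k l (x k) (x l))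
      (hΨ _ _) hij.ne]
    refine Finset.prod_congr (Finset.filter_congr fun p _ => ?_) fun _ _ => rfl
    have hji := hij.symm
    grind [Sym2.eq_iff]
  -- every edge lies inside `A`, inside `B`, or is `{i, j}`
  have hsplit := Finset.prod_eq_prod_filter_mul_prod_filter_mul_prod_filter
    (Finset.univ.filter fun p : V × V => G.Adj p.1 p.2 ∧ p.1 < p.2)
    (fun p => p.1 ∈ A ∧ p.2 ∈ A) (fun p => p.1 ∈ B ∧ p.2 ∈ B)
    (fun p => s(p.1, p.2) = s(i, j)) (fun p => Ψ p.1 p.2 (x p.1) (x p.2)) fun p hp => by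
      simp only [Finset.mem_filter, Finset.mem_univ, true_and] at hp
      have hcut_p := hcut _ _ hp.1
      grind [Sym2.eq_iff]
  simp only [edgeProd, Set.mem_univ, and_true]
  rw [hsplit, hcross]
  simp only [Finset.filter_filter, and_assoc]

lemma prod_filter_ne_eq_mul {M : Type} [CommMonoid M] (f : V → M) (hAB : IsCompl A B)
    (hi : i ∈ A) (hj : j ∈ B) :
    ∏ v ∈ Finset.univ.filter (· ≠ i), f v
      = (∏ v ∈ Finset.univ.filter (fun v => v ∈ A ∧ v ≠ i), f v)
        * ((∏ v ∈ Finset.univ.filter (fun v => v ∈ B ∧ v ≠ j), f v) * f j) := by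
  have hB := hAB.mem_iff_notMem
  rw [← Fintype.prod_ite_eq' j f]
  simp only [Finset.prod_filter, ← Finset.prod_mul_distrib]
  refine Finset.prod_congr rfl fun v _ => ?_
  by_cases hvi : v = i
  · subst hvi; simp [hi, hB, (ne_of_mem_of_not_mem hi ((hB j).1 hj))]
  by_cases hvj : v = j
  · subst hvj; simp [hj, hvi, (hB _).1 hj]
  by_cases hv : v ∈ A <;> simp [hv, hB, hvi, hvj]

lemma gibbsWeight_univ_eq_mul (G : SimpleGraph V) (Φ : V → 𝒳 → ℝ) (Ψ : V → V → 𝒳 → 𝒳 → ℝ)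
    (hΨ : ∀ a b, Ψ j i b a = Ψ i j a b) (hij : G.Adj i j) (hAB : IsCompl A B) (hi : i ∈ A)
    (hj : j ∈ B) (hcut : ∀ k l, G.Adj k l → s(k, l) ≠ s(i, j) → (k ∈ A ↔ l ∈ A))
    (x : V → 𝒳) :
    gibbsWeight G Set.univ Φ Ψ i x
      = gibbsWeight G A Φ Ψ i x * (Ψ j i (x j) (x i) * (Φ j (x j) * gibbsWeight G B Φ Ψ j x)) := by
  simp only [gibbsWeight, Set.mem_univ, true_and]
  rw [edgeProd_univ_eq_mul G Ψ hΨ hij hAB hi hj hcut, prod_filter_ne_eq_mul _ hAB hi hj, hΨ]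
  ring

theorem belief_univ_eq_of_isCompl [Fintype 𝒳] (G : SimpleGraph V) (Φ : V → 𝒳 → ℝ)
    (Ψ : V → V → 𝒳 → 𝒳 → ℝ) (hΨ : ∀ a b, Ψ j i b a = Ψ i j a b) (hij : G.Adj i j)
    (hAB : IsCompl A B) (hi : i ∈ A) (hj : j ∈ B)
    (hcut : ∀ k l, G.Adj k l → s(k, l) ≠ s(i, j) → (k ∈ A ↔ l ∈ A)) (x0 xi : 𝒳) :
    belief G Set.univ Φ Ψ x0 i xi
      = belief G A Φ Ψ x0 i xi * ∑ xj, Ψ j i xj xi * belief G B Φ Ψ x0 j xj := by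
  rw [sum_mul_belief_eq_sum, belief_eq_mul_sum_gibbsWeight, belief_eq_mul_sum_gibbsWeight,
    mul_assoc, ← sum_filter_mul_eq_sum_mul_sum hAB x0 (· i = xi) (gibbsWeight G A Φ Ψ i)
      (fun z => Ψ j i (z j) xi * (Φ j (z j) * gibbsWeight G B Φ Ψ j z))
      (fun x y h => by rw [h hi]) (fun x y h => gibbsWeight_congr G A Φ Ψ i h)
      (fun x y h => by rw [h hj, gibbsWeight_congr G B Φ Ψ j h])]
  congr 1
  refine Finset.sum_congr (by simp) fun x hx => ?_
  rw [gibbsWeight_univ_eq_mul G Φ Ψ hΨ hij hAB hi hj hcut, (Finset.mem_filter.1 hx).2]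

end Gibbs

theorem belief_factorization_general
    {V 𝒳 : Type} [Fintype V] [LinearOrder V] [Fintype 𝒳]
    (G : SimpleGraph V) (hconn : G.Connected) (hacyc : G.IsAcyclic)
    (Φ : V → 𝒳 → ℝ) (Ψ : V → V → 𝒳 → 𝒳 → ℝ)
    (hΨsymm : ∀ k l a b, Ψ k l a b = Ψ l k b a)
    (x0 : 𝒳) (i j : V) (hij : G.Adj i j) (xi : 𝒳) :
    belief G Set.univ Φ Ψ x0 i xi
      = belief G (compSet G i j) Φ Ψ x0 i xi *
          ∑ xj : 𝒳, Ψ j i xj xi * belief G (compSet G j i) Φ Ψ x0 j xj :=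
  belief_univ_eq_of_isCompl G Φ Ψ (fun a b => (hΨsymm i j a b).symm) hij
    (isCompl_compSet_compSet_swap hconn hacyc hij) (mem_compSet_self G i j)
    (mem_compSet_self G j i) (fun _ _ hkl hne => mem_compSet_iff_of_adj hkl hne) x0 xi

/-- In a finite tree `G` with edge `{i,j}`, the belief
`Z_i(x_i)` (computed on all of `G`) factors as
`Z_i(x_i) = Z_i^{i∖j}(x_i) · Σ_{x_j} Ψ_{ji}(x_j, x_i) Z_j^{j∖i}(x_j)`,
where `Z_i^{i∖j}` and `Z_j^{j∖i}` are the beliefs on the two components of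
`G ∖ {i,j}`. -/
theorem belief_factorization
    {V 𝒳 : Type} [Fintype V] [LinearOrder V] [Fintype 𝒳]
    (G : SimpleGraph V) (hconn : G.Connected) (hacyc : G.IsAcyclic)
    (Φ : V → 𝒳 → ℝ) (Ψ : V → V → 𝒳 → 𝒳 → ℝ)
    (hΦ : ∀ k a, 0 < Φ k a) (hΨ : ∀ k l a b, 0 < Ψ k l a b)
    (hΨsymm : ∀ k l a b, Ψ k l a b = Ψ l k b a)
    (x0 : 𝒳) (i j : V) (hij : G.Adj i j) (xi : 𝒳) :
    belief G Set.univ Φ Ψ x0 i xi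
      = belief G (compSet G i j) Φ Ψ x0 i xi *
          ∑ xj : 𝒳, Ψ j i xj xi * belief G (compSet G j i) Φ Ψ x0 j xj :=
  belief_factorization_general G hconn hacyc Φ Ψ hΨsymm x0 i j hij xi
end

section
/- Let T be the associated tree for loop cutset L and edge {i,j}∈E(T). If l ∈ L_{i∖j} (all copies of l lie in T_{i∖j}), then for any two loop cutset configurations x_L and x'_L differing only in the value at l, the conditioned messages m_{j→i}^{(x_L)} and m_{j→i}^{(x'_L)} are equal. -/
open scoped Classical

/-! ### Local Conditioning on an associated tree

`T` is the associated tree (on vertex type `W`) for the loop cutset `L ⊆ V` of an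
original graph; `π : W → V` sends each tree node to the original node it is a copy of. -/

/-- Self potentials conditioned on the configuration `x` at (copies of) the nodes of
`S`: the self potential of each copy `w` with `π w ∈ S` is multiplied by the indicator
`δ^{(x (π w))}`. -/
noncomputable def condPhi {W V 𝒳 : Type} (π : W → V) (Φ : W → 𝒳 → ℝ)
    (S : Finset V) (x : V → 𝒳) : W → 𝒳 → ℝ :=
  fun w a => if π w ∈ S then (if a = x (π w) then Φ w a else 0) else Φ w a

/-- The BP message from `j` to `i` on the associated tree `T`, conditioned (via
indicator-modified self potentials) on the configuration `x` at the nodes of `S`. -/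
noncomputable def condMsg {W V 𝒳 : Type} [Fintype W] [LinearOrder W] [Fintype 𝒳]
    (T : SimpleGraph W) (π : W → V) (Φ : W → 𝒳 → ℝ) (Ψ : W → W → 𝒳 → 𝒳 → ℝ)
    (x0 : 𝒳) (S : Finset V) (x : V → 𝒳) (j i : W) (xi : 𝒳) : ℝ :=
  msg T (condPhi π Φ S x) Ψ x0 j i xi

/-- `Lside T π L a b` is `L_{a∖b}`: the loop cutset nodes *all of whose copies* lie in
the component `T_{a∖b}` of `T` minus the edge `{a,b}` containing `a`. -/
noncomputable def Lside {W V : Type} (T : SimpleGraph W) (π : W → V)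
    (L : Finset V) (a b : W) : Finset V :=
  L.filter (fun l => ∀ w : W, π w = l → w ∈ compSet T a b)

/-- `Rset T π L a b` is the relevant set `R_{ab} = L ∖ (L_{a∖b} ∪ L_{b∖a})` of the edge
`{a,b}` of the associated tree. -/
noncomputable def Rset {W V : Type} [DecidableEq V] (T : SimpleGraph W) (π : W → V)
    (L : Finset V) (a b : W) : Finset V :=
  L \ (Lside T π L a b ∪ Lside T π L b a)

/-- Overwrite the configuration `x : V → 𝒳` by the configuration `y` on `S`. -/
def patch {V 𝒳 : Type} [DecidableEq V] (x : V → 𝒳) (S : Finset V) (y : {v // v ∈ S} → 𝒳) : V → 𝒳 :=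
  fun v => if h : v ∈ S then y ⟨v, h⟩ else x v

/-- The reduced message `m_{j→i}^{(x_{R_{ji}})}`: the sum of the fully conditioned
messages over all configurations of the upstream loop cutset nodes `L_{j∖i}` (the
remaining conditioning values being given by `x`). -/
noncomputable def redMsg {W V 𝒳 : Type} [Fintype W] [LinearOrder W] [Fintype 𝒳]
    (T : SimpleGraph W) (π : W → V) (L : Finset V)
    (Φ : W → 𝒳 → ℝ) (Ψ : W → W → 𝒳 → 𝒳 → ℝ) (x0 : 𝒳)
    (j i : W) (x : V → 𝒳) (xi : 𝒳) : ℝ :=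
  ∑ y : {v // v ∈ Lside T π L j i} → 𝒳,
    condMsg T π Φ Ψ x0 L (patch x (Lside T π L j i) y) j i xi

/-! Conditioning on `x_L` only touches the self potentials of copies of cutset nodes, and the
message `m_{j→i}` only reads the self potentials on `T_{j∖i}`. Since `{i,j}` is a bridge of the
tree, `T_{j∖i}` is disjoint from `T_{i∖j}`, which holds every copy of `l`; so the two conditioned
potentials agree wherever the message looks. -/

namespace SimpleGraph

variable {V : Type} {G : SimpleGraph V} {a b : V}

lemma IsBridge.disjoint_compSet (h : G.IsBridge s(a, b)) :
    Disjoint (compSet G a b) (compSet G b a) := by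
  refine Set.disjoint_left.mpr fun w hwa hwb => h ?_
  have hwb' : (G.deleteEdges {s(a, b)}).Reachable b w := by
    simpa only [compSet, Set.mem_ofPred_eq, Sym2.eq_swap] using hwb
  exact (show (G.deleteEdges {s(a, b)}).Reachable a w from hwa).trans hwb'.symm

end SimpleGraph

section Congr

variable {V 𝒳 : Type} [Fintype V] [LinearOrder V] [Fintype 𝒳]
  {G : SimpleGraph V} {Φ Φ' : V → 𝒳 → ℝ} {Ψ : V → V → 𝒳 → 𝒳 → ℝ} {x0 : 𝒳}

lemma belief_congr {C : Set V} {i : V} (hi : i ∈ C) (h : ∀ v ∈ C, Φ v = Φ' v) :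
    belief G C Φ Ψ x0 i = belief G C Φ' Ψ x0 i := by
  funext xi
  unfold belief
  rw [h i hi]
  congr 1
  refine Finset.sum_congr rfl fun x _ => congr_arg _ (Finset.prod_congr rfl fun v hv => ?_)
  rw [h v (Finset.mem_filter.mp hv).2.1]

lemma msg_congr {j i : V} (h : ∀ v ∈ compSet G j i, Φ v = Φ' v) :
    msg G Φ Ψ x0 j i = msg G Φ' Ψ x0 j i := by
  funext xi
  simp only [msg, belief_congr (SimpleGraph.Reachable.refl j) h]

end Congr

lemma condPhi_congr {W V 𝒳 : Type} {π : W → V} {Φ : W → 𝒳 → ℝ} {S : Finset V}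
    {x x' : V → 𝒳} {w : W} (h : π w ∈ S → x (π w) = x' (π w)) :
    condPhi π Φ S x w = condPhi π Φ S x' w := by
  funext a
  by_cases hw : π w ∈ S <;> simp [condPhi, hw, h]

theorem condMsg_independent_of_downstream_cutset_value_general
    {W V 𝒳 : Type} [Fintype W] [LinearOrder W] [Fintype 𝒳]
    (T : SimpleGraph W) (hacyc : T.IsAcyclic)
    (π : W → V) (L : Finset V)
    (Φ : W → 𝒳 → ℝ) (Ψ : W → W → 𝒳 → 𝒳 → ℝ) (x0 : 𝒳)
    (i j : W) (hij : T.Adj i j)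
    (l : V)
    (hdown : ∀ w : W, π w = l → w ∈ compSet T i j)
    (x x' : V → 𝒳) (hagree : ∀ l' ∈ L, l' ≠ l → x l' = x' l') (xi : 𝒳) :
    condMsg T π Φ Ψ x0 L x j i xi = condMsg T π Φ Ψ x0 L x' j i xi := by
  have hdisj := (SimpleGraph.isAcyclic_iff_forall_adj_isBridge.mp hacyc hij).disjoint_compSet
  have hne : ∀ w ∈ compSet T j i, π w ≠ l := fun w hw hwl =>
    Set.disjoint_left.mp hdisj (hdown w hwl) hw
  unfold condMsg
  rw [msg_congr fun w hw => condPhi_congr fun hwL => hagree (π w) hwL (hne w hw)]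

/-- Let `T` be the associated tree for loop cutset `L` (with
projection `π` onto original nodes) and `{i,j}` an edge of `T`.  If `l ∈ L_{i∖j}` (all
copies of `l` lie in `T_{i∖j}`), then for any two loop cutset configurations differing
only in the value at `l`, the conditioned messages from `j` to `i` are equal. -/
theorem condMsg_independent_of_downstream_cutset_value
    {W V 𝒳 : Type} [Fintype W] [LinearOrder W] [Fintype V] [DecidableEq V] [Fintype 𝒳]
    (T : SimpleGraph W) (hconn : T.Connected) (hacyc : T.IsAcyclic)
    (π : W → V) (L : Finset V)
    (Φ : W → 𝒳 → ℝ) (Ψ : W → W → 𝒳 → 𝒳 → ℝ) (x0 : 𝒳)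
    (i j : W) (hij : T.Adj i j)
    (l : V) (hl : l ∈ L)
    (hdown : ∀ w : W, π w = l → w ∈ compSet T i j)
    (x x' : V → 𝒳) (hagree : ∀ l' ∈ L, l' ≠ l → x l' = x' l') (xi : 𝒳) :
    condMsg T π Φ Ψ x0 L x j i xi = condMsg T π Φ Ψ x0 L x' j i xi :=
  condMsg_independent_of_downstream_cutset_value_general T hacyc π L Φ Ψ x0 i j hij l hdown x x'
    hagree xi
end

section
/- Let T be the associated tree for loop cutset L and edge {i,j}∈E(T). The sum Σ_{x_{L_{j∖i}}} m_{j→i}^{(x_{R_{ji}}, x_{L_{j∖i}})} over configurations of loop cutset nodes all of whose copies are upstream of the edge equals the message m_{j→i}^{(x_{R_{ji}})} computed from the Gibbs distribution on T_{j∖i} with the upstream loop cutset nodes unconditioned (their indicator potentials summed out). -/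
open scoped Classical

/-- The indicator that all copies of the original node `l` agree in the tree
configuration `z : W → 𝒳` — this is what remains of the conditioning indicator
potentials of `l` after its value has been summed out. -/
noncomputable def eqInd {W V 𝒳 : Type} (π : W → V) (l : V) (z : W → 𝒳) : ℝ :=
  if ∀ w w' : W, π w = l → π w' = l → z w = z w' then 1 else 0

/-- The belief at `j` on the subgraph spanned by `C`, with an extra weight `ρ`
multiplying each configuration (used for summed-out equality-constraint potentials). -/
noncomputable def beliefConstr {W 𝒳 : Type} [Fintype W] [LinearOrder W] [Fintype 𝒳]
    (T : SimpleGraph W) (C : Set W) (Φ : W → 𝒳 → ℝ) (Ψ : W → W → 𝒳 → 𝒳 → ℝ)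
    (ρ : (W → 𝒳) → ℝ) (x0 : 𝒳) (j : W) (xj : 𝒳) : ℝ :=
  Φ j xj *
    ∑ z ∈ Finset.univ.filter
        (fun z : W → 𝒳 => z j = xj ∧ ∀ v, v ∉ C → z v = x0),
      edgeProd T C Ψ z *
        (∏ v ∈ Finset.univ.filter (fun v => v ∈ C ∧ v ≠ j), Φ v (z v)) * ρ z

/-!
Inside `T_{j∖i}` every cutset node lies in `R_{ji}` or in `L_{j∖i}`, so the fully conditioned
self potentials factor as the `R_{ji}`-conditioned ones times the indicators `δ^{(y_l)}(z w)`
of the copies `w` of the nodes `l ∈ L_{j∖i}`, all of which lie in `T_{j∖i}`. The sum over `y`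
then factors over `l ∈ L_{j∖i}`, and `∑_a ∏_{π w = l} δ^{(a)}(z w)` is `1` when all copies of
`l` agree and `0` otherwise, because `l` has at least one copy.
-/

section LocalConditioning

variable {W V 𝒳 : Type}

lemma compSet_swap_eq_of_mem {G : SimpleGraph W} {a b v : W} (hv : v ∈ compSet G a b)
    (hv' : v ∈ compSet G b a) : compSet G b a = compSet G a b := by
  have hba : (G.deleteEdges {s(a, b)}).Reachable b a := by
    rw [compSet, Set.mem_ofPred_eq, Sym2.eq_swap] at hv'
    exact hv'.trans hv.symm
  ext w
  simp only [compSet, Set.mem_ofPred_eq, Sym2.eq_swap (a := b)]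
  exact ⟨hba.symm.trans, hba.trans⟩

lemma Lside_subset (T : SimpleGraph W) (π : W → V) (L : Finset V) (a b : W) :
    Lside T π L a b ⊆ L :=
  Finset.filter_subset _ _

lemma mem_compSet_of_mem_Lside {T : SimpleGraph W} {π : W → V} {L : Finset V} {a b w : W}
    (hw : π w ∈ Lside T π L a b) : w ∈ compSet T a b :=
  (Finset.mem_filter.mp hw).2 w rfl

lemma disjoint_Lside_Rset [DecidableEq V] (T : SimpleGraph W) (π : W → V) (L : Finset V)
    (a b : W) : Disjoint (Lside T π L a b) (Rset T π L a b) :=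
  Finset.disjoint_left.mpr fun _ hS hR =>
    (Finset.mem_sdiff.mp hR).2 (Finset.mem_union_left _ hS)

/-- A cutset node with a copy in `T_{j∖i}` cannot have all its copies in `T_{i∖j}` without
also having them all in `T_{j∖i}`, since the two components then coincide. -/
lemma mem_iff_mem_Lside_or_mem_Rset [DecidableEq V] {T : SimpleGraph W} {π : W → V}
    {L : Finset V} {i j v : W} (hv : v ∈ compSet T j i) :
    π v ∈ L ↔ π v ∈ Lside T π L j i ∨ π v ∈ Rset T π L j i := by
  refine ⟨fun hL => or_iff_not_imp_left.mpr fun hS => Finset.mem_sdiff.mpr ⟨hL, fun h => ?_⟩,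
    fun h => h.elim (fun h => Lside_subset T π L j i h) (fun h => (Finset.mem_sdiff.mp h).1)⟩
  rcases Finset.mem_union.mp h with h | h
  · exact hS h
  · have hcopies := (Finset.mem_filter.mp h).2
    rw [compSet_swap_eq_of_mem hv (hcopies v rfl)] at hcopies
    exact hS (Finset.mem_filter.mpr ⟨hL, hcopies⟩)

lemma condPhi_patch_eq_mul [DecidableEq V] (π : W → V) (Φ : W → 𝒳 → ℝ) {S R L : Finset V}
    (x : V → 𝒳) (y : {v // v ∈ S} → 𝒳) {w : W} (hL : π w ∈ L ↔ π w ∈ S ∨ π w ∈ R)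
    (hSR : Disjoint S R) (a : 𝒳) :
    condPhi π Φ L (patch x S y) w a
      = condPhi π Φ R x w a * condPhi π (fun _ _ => 1) S (patch x S y) w a := by
  have hSR' : π w ∈ S → π w ∉ R := fun h => Finset.disjoint_left.mp hSR h
  unfold condPhi patch
  split_ifs <;> simp_all

lemma sum_prod_ite_eq_eqInd [Fintype W] [Fintype 𝒳] [DecidableEq V] (π : W → V) {l : V}
    (hl : ∃ w, π w = l) (z : W → 𝒳) :
    ∑ a : 𝒳, ∏ w ∈ Finset.univ.filter (fun w => π w = l), (if z w = a then (1 : ℝ) else 0)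
      = eqInd π l z := by
  obtain ⟨w₀, hw₀⟩ := hl
  simp only [Finset.prod_boole, Finset.mem_filter, Finset.mem_univ, true_and, eqInd]
  by_cases hagree : ∀ w w' : W, π w = l → π w' = l → z w = z w'
  · have hiff : ∀ a, (∀ w, π w = l → z w = a) ↔ z w₀ = a :=
      fun a => ⟨fun h => h w₀ hw₀, fun h w hw => (hagree w w₀ hw hw₀).trans h⟩
    simp only [hiff, if_pos hagree, Finset.sum_ite_eq, Finset.mem_univ, if_true]
  · rw [if_neg hagree]
    refine Finset.sum_eq_zero fun a _ => if_neg fun h => hagree fun w w' hw hw' => ?_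
    rw [h w hw, h w' hw']

lemma prod_condPhi_one_patch_eq_prod_fiber [Fintype W] [DecidableEq V] (π : W → V)
    {S : Finset V} (hcop : ∀ l ∈ S, ∃ w, π w = l) (x : V → 𝒳) (y : {v // v ∈ S} → 𝒳)
    (z : W → 𝒳) :
    ∏ w, condPhi π (fun _ _ => 1) S (patch x S y) w (z w)
      = ∏ l : {v // v ∈ S},
          ∏ w ∈ Finset.univ.filter (fun w => π w = l.1), (if z w = y l then (1 : ℝ) else 0) := by
  have hS : S ⊆ Finset.univ.image π := fun l hl => by
    obtain ⟨w, hw⟩ := hcop l hl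
    exact Finset.mem_image.mpr ⟨w, Finset.mem_univ w, hw⟩
  rw [← Finset.prod_fiberwise_of_maps_to
      (fun w _ => Finset.mem_image_of_mem π (Finset.mem_univ w)),
    ← Finset.prod_subset hS fun l _ hl => Finset.prod_eq_one fun w hw => ?_,
    ← Finset.prod_coe_sort S]
  · refine Finset.prod_congr rfl fun l _ => Finset.prod_congr rfl fun w hw => ?_
    have hwl := (Finset.mem_filter.mp hw).2
    have hwS : π w ∈ S := hwl ▸ l.2
    simp only [condPhi, patch, if_pos hwS, dif_pos hwS,
      show (⟨π w, hwS⟩ : {v // v ∈ S}) = l from Subtype.ext hwl]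
  · have hw : π w ∉ S := (Finset.mem_filter.mp hw).2 ▸ hl
    simp only [condPhi, if_neg hw]

lemma sum_prod_condPhi_one_patch_eq_prod_eqInd [Fintype W] [Fintype 𝒳] [DecidableEq V]
    (π : W → V) {S : Finset V} (hcop : ∀ l ∈ S, ∃ w, π w = l) (x : V → 𝒳) (z : W → 𝒳) :
    ∑ y : {v // v ∈ S} → 𝒳, ∏ w, condPhi π (fun _ _ => 1) S (patch x S y) w (z w)
      = ∏ l ∈ S, eqInd π l z := by
  simp only [prod_condPhi_one_patch_eq_prod_fiber π hcop]
  rw [← Finset.prod_coe_sort S,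
    ← Finset.prod_congr rfl fun (l : {v // v ∈ S}) _ => sum_prod_ite_eq_eqInd π (hcop l l.2) z,
    Fintype.prod_sum]

lemma sum_prod_condPhi_patch [Fintype W] [Fintype 𝒳] [DecidableEq V] (π : W → V)
    (Φ : W → 𝒳 → ℝ) {C : Finset W} {S R L : Finset V} (hcop : ∀ l ∈ S, ∃ w, π w = l)
    (hSC : ∀ w, π w ∈ S → w ∈ C) (hL : ∀ w ∈ C, π w ∈ L ↔ π w ∈ S ∨ π w ∈ R)
    (hSR : Disjoint S R) (x : V → 𝒳) (z : W → 𝒳) :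
    ∑ y : {v // v ∈ S} → 𝒳, ∏ w ∈ C, condPhi π Φ L (patch x S y) w (z w)
      = (∏ w ∈ C, condPhi π Φ R x w (z w)) * ∏ l ∈ S, eqInd π l z := by
  have hsplit : ∀ y : {v // v ∈ S} → 𝒳,
      ∏ w ∈ C, condPhi π Φ L (patch x S y) w (z w)
        = (∏ w ∈ C, condPhi π Φ R x w (z w))
          * ∏ w, condPhi π (fun _ _ => 1) S (patch x S y) w (z w) := by
    intro y
    rw [Finset.prod_congr rfl fun w hw => condPhi_patch_eq_mul π Φ x y (hL w hw) hSR (z w),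
      Finset.prod_mul_distrib]
    congr 1
    refine Finset.prod_subset (Finset.subset_univ C) fun w _ hw => ?_
    simp only [condPhi, if_neg (mt (hSC w) hw)]
  rw [Finset.sum_congr rfl fun y _ => hsplit y, ← Finset.mul_sum,
    sum_prod_condPhi_one_patch_eq_prod_eqInd π hcop]

lemma mul_prod_filter_mem_ne [Fintype W] [DecidableEq W] {C : Set W} {j : W} (hj : j ∈ C)
    (g : W → ℝ) :
    g j * ∏ v ∈ Finset.univ.filter (fun v => v ∈ C ∧ v ≠ j), g v
      = ∏ v ∈ Finset.univ.filter (· ∈ C), g v := by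
  rw [← Finset.filter_filter, Finset.filter_ne', Finset.mul_prod_erase]
  exact Finset.mem_filter.mpr ⟨Finset.mem_univ j, hj⟩

lemma belief_eq_sum_prod [Fintype W] [LinearOrder W] [Fintype 𝒳] (G : SimpleGraph W)
    {C : Set W} (Φ : W → 𝒳 → ℝ) (Ψ : W → W → 𝒳 → 𝒳 → ℝ) (x0 : 𝒳) {j : W} (hj : j ∈ C)
    (xj : 𝒳) :
    belief G C Φ Ψ x0 j xj
      = ∑ z ∈ Finset.univ.filter (fun z : W → 𝒳 => z j = xj ∧ ∀ v, v ∉ C → z v = x0),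
          edgeProd G C Ψ z * ∏ v ∈ Finset.univ.filter (· ∈ C), Φ v (z v) := by
  rw [belief, Finset.mul_sum]
  refine Finset.sum_congr rfl fun z hz => ?_
  rw [← (Finset.mem_filter.mp hz).2.1, mul_left_comm,
    mul_prod_filter_mem_ne hj fun v => Φ v (z v)]

lemma beliefConstr_eq_sum_prod [Fintype W] [LinearOrder W] [Fintype 𝒳] (G : SimpleGraph W)
    {C : Set W} (Φ : W → 𝒳 → ℝ) (Ψ : W → W → 𝒳 → 𝒳 → ℝ) (ρ : (W → 𝒳) → ℝ) (x0 : 𝒳)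
    {j : W} (hj : j ∈ C) (xj : 𝒳) :
    beliefConstr G C Φ Ψ ρ x0 j xj
      = ∑ z ∈ Finset.univ.filter (fun z : W → 𝒳 => z j = xj ∧ ∀ v, v ∉ C → z v = x0),
          edgeProd G C Ψ z * ((∏ v ∈ Finset.univ.filter (· ∈ C), Φ v (z v)) * ρ z) := by
  rw [beliefConstr, Finset.mul_sum]
  refine Finset.sum_congr rfl fun z hz => ?_
  rw [← (Finset.mem_filter.mp hz).2.1, ← mul_prod_filter_mem_ne hj fun v => Φ v (z v)]
  ring

end LocalConditioning

theorem sum_upstream_conditioned_messages_general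
    {W V 𝒳 : Type} [Fintype W] [LinearOrder W] [DecidableEq V] [Fintype 𝒳]
    (T : SimpleGraph W)
    (π : W → V) (L : Finset V)
    (hcopies : ∀ l ∈ L, ∃ w : W, π w = l)
    (Φ : W → 𝒳 → ℝ) (Ψ : W → W → 𝒳 → 𝒳 → ℝ) (x0 : 𝒳)
    (i j : W) (x : V → 𝒳) (xi : 𝒳) :
    ∑ y : {v // v ∈ Lside T π L j i} → 𝒳,
        condMsg T π Φ Ψ x0 L (patch x (Lside T π L j i) y) j i xi
      = ∑ xj : 𝒳, Ψ j i xj xi *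
          beliefConstr T (compSet T j i)
            (condPhi π Φ (Rset T π L j i) x) Ψ
            (fun z => ∏ l ∈ Lside T π L j i, eqInd π l z) x0 j xj := by
  have hj : j ∈ compSet T j i := SimpleGraph.Reachable.refl j
  simp only [condMsg, msg, belief_eq_sum_prod _ _ _ _ hj, beliefConstr_eq_sum_prod _ _ _ _ _ hj,
    Finset.mul_sum]
  rw [Finset.sum_comm]
  refine Finset.sum_congr rfl fun xj _ => ?_
  rw [Finset.sum_comm]
  refine Finset.sum_congr rfl fun z _ => ?_
  simp only [← Finset.mul_sum]
  rw [sum_prod_condPhi_patch π Φ (fun l hl => hcopies l (Lside_subset T π L j i hl))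
    (fun w hw => Finset.mem_filter.mpr ⟨Finset.mem_univ w, mem_compSet_of_mem_Lside hw⟩)
    (fun w hw => mem_iff_mem_Lside_or_mem_Rset (Finset.mem_filter.mp hw).2)
    (disjoint_Lside_Rset T π L j i)]

/-- For an edge `{i,j}` of the associated tree `T`, summing the fully
conditioned messages `m_{j→i}^{(x_{R_{ji}}, x_{L_{j∖i}})}` over the configurations of
the upstream loop cutset nodes `L_{j∖i}` yields exactly the message computed from the
Gibbs distribution on `T_{j∖i}` conditioned only on the relevant set `R_{ji}`, with the
indicator potentials of the upstream loop cutset nodes summed out (leaving, for each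
such node, the constraint that all of its copies agree). -/
theorem sum_upstream_conditioned_messages
    {W V 𝒳 : Type} [Fintype W] [LinearOrder W] [Fintype V] [DecidableEq V] [Fintype 𝒳]
    (T : SimpleGraph W) (hconn : T.Connected) (hacyc : T.IsAcyclic)
    (π : W → V) (L : Finset V)
    (hcopies : ∀ l ∈ L, ∃ w : W, π w = l)
    (Φ : W → 𝒳 → ℝ) (Ψ : W → W → 𝒳 → 𝒳 → ℝ) (x0 : 𝒳)
    (i j : W) (hij : T.Adj i j) (x : V → 𝒳) (xi : 𝒳) :
    ∑ y : {v // v ∈ Lside T π L j i} → 𝒳,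
        condMsg T π Φ Ψ x0 L (patch x (Lside T π L j i) y) j i xi
      = ∑ xj : 𝒳, Ψ j i xj xi *
          beliefConstr T (compSet T j i)
            (condPhi π Φ (Rset T π L j i) x) Ψ
            (fun z => ∏ l ∈ Lside T π L j i, eqInd π l z) x0 j xj :=
  sum_upstream_conditioned_messages_general T π L hcopies Φ Ψ x0 i j x xi
end
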